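/- arXiv:1708.06306 — 6 statements merged into one kernel-verified Lean document; each statement's English description precedes it below -/
import Mathlib

section
/- For real ν with -2 ≤ ν < 2, both roots of z^2 - (1 + ν/2)z + ν/2 have absolute value at most 1, and the root of absolute value 1 (namely z = 1) is simple; hence the root condition (0-stability) holds. Conversely, if ν < -2 or ν ≥ 2 the root condition fails. -/
open Polynomial

/-- A polynomial satisfies the root condition if all roots lie in the closed
unit disk and any root on the unit circle is simple. -/
def RootCondition (p : Polynomial ℂ) : Prop :=
  (∀ z : ℂ, p.IsRoot z → ‖z‖ ≤ 1) ∧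
  (∀ z : ℂ, p.IsRoot z → ‖z‖ = 1 → p.rootMultiplicity z = 1)

/-- The root condition (0-stability) for `z² - (1+ν/2)z + ν/2` holds
iff `-2 ≤ ν < 2`. -/
theorem stmt_1 (ν : ℝ) :
    RootCondition (X ^ 2 - C (1 + (ν : ℂ) / 2) * X + C ((ν : ℂ) / 2)) ↔
      -2 ≤ ν ∧ ν < 2 := by
  set a : ℂ := (ν : ℂ) / 2 with ha
  have hfac : X ^ 2 - C (1 + (ν : ℂ) / 2) * X + C ((ν : ℂ) / 2)
      = (X - C 1) * (X - C a) := by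
    rw [ha]; simp only [C_add, C_mul, C_1]; ring
  have h1 : (X - C (1:ℂ)) ≠ 0 := X_sub_C_ne_zero 1
  have h2 : (X - C a) ≠ 0 := X_sub_C_ne_zero a
  have hroot : ∀ z : ℂ, ((X - C 1) * (X - C a)).IsRoot z ↔ z = 1 ∨ z = a := by
    intro z
    simp [IsRoot, sub_eq_zero]
  have hmul : ∀ z : ℂ, ((X - C 1) * (X - C a)).rootMultiplicity z =
      (if z = 1 then 1 else 0) + (if z = a then 1 else 0) := by
    intro z
    rw [rootMultiplicity_mul (mul_ne_zero h1 h2), rootMultiplicity_X_sub_C,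
      rootMultiplicity_X_sub_C]
  have hnorm : ‖a‖ = |ν| / 2 := by
    rw [ha, norm_div, Complex.norm_real, Real.norm_eq_abs]; norm_num
  rw [hfac]
  constructor
  · rintro ⟨hle, hsimp⟩
    have haroot : ((X - C 1) * (X - C a)).IsRoot a := (hroot a).mpr (Or.inr rfl)
    have hna := hle a haroot
    rw [hnorm] at hna
    have habs : |ν| ≤ 2 := by linarith
    have hge : -2 ≤ ν := by cases abs_le.mp habs; linarith
    refine ⟨hge, ?_⟩
    by_contra hlt
    push_neg at hlt
    have hν2 : ν = 2 := le_antisymm (abs_le.mp habs).2 hlt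
    have ha1 : a = 1 := by rw [ha, hν2]; norm_num
    have := hsimp 1 ((hroot 1).mpr (Or.inl rfl)) (by norm_num)
    rw [hmul 1] at this
    simp [ha1] at this
  · rintro ⟨hge, hlt⟩
    have habs : |ν| ≤ 2 := abs_le.mpr ⟨by linarith, le_of_lt hlt⟩
    have hna : ‖a‖ ≤ 1 := by rw [hnorm]; linarith
    have hane : a ≠ 1 := by
      rw [ha]; intro h
      have : (ν : ℂ) = 2 := by field_simp at h; exact_mod_cast h
      have : ν = 2 := by exact_mod_cast this
      linarith
    constructor
    · intro z hz
      rcases (hroot z).mp hz with rfl | rfl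
      · norm_num
      · exact hna
    · intro z hz hz1
      rw [hmul z]
      rcases (hroot z).mp hz with rfl | rfl
      · simp [Ne.symm hane]
      · simp [hane]
end

section
/- Let a, b, c be real with a ≠ -1, and consider the two-step method with coefficients α₂ = 1/(1+a), α₁ = -(1+a+b)/(1+a), α₀ = -c/(1+a), β₂ = 1/(1+a), β₁ = -b/(1+a), β₀ = -c/(1+a). Then the consistency conditions α₂+α₁+α₀ = 0 and α₂ - α₀ - (β₂+β₁+β₀) = 0 hold if and only if a = c and b = -2a. -/
/-- Consistency conditions of the induced two-step method hold iff
`a = c` and `b = -2a`. -/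
theorem stmt_3 (a b c : ℝ) (ha : a ≠ -1) :
    let α₂ := 1 / (1 + a)
    let α₁ := -(1 + a + b) / (1 + a)
    let α₀ := -c / (1 + a)
    let β₂ := 1 / (1 + a)
    let β₁ := -b / (1 + a)
    let β₀ := -c / (1 + a)
    (α₂ + α₁ + α₀ = 0 ∧ α₂ - α₀ - (β₂ + β₁ + β₀) = 0) ↔ (a = c ∧ b = -2 * a) := by
  have h1 : (1 : ℝ) + a ≠ 0 := by intro h; apply ha; linarith
  simp only
  field_simp
  constructor <;> rintro ⟨h2, h3⟩ <;> constructor <;> linarith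
end

section
/- With filter coefficients a = c = -ν/2, b = ν (ν ≠ 2), the induced two-step method satisfies the second-order condition (1/2)α₂ + (1/2)α₀ - β₂ + β₀ = 0 if and only if ν = 2/3. -/
lemma secondOrderDefect_eq (ν : ℝ) :
    (1 / 2) * (1 / (1 - ν / 2)) + (1 / 2) * ((ν / 2) / (1 - ν / 2)) - 1 / (1 - ν / 2)
      + (ν / 2) / (1 - ν / 2) = (3 * ν / 4 - 1 / 2) / (1 - ν / 2) := by
  ring

/-- For the backward Euler plus filter method the second-order condition
holds iff `ν = 2/3`. -/
theorem stmt_4 (ν : ℝ) (hν : ν ≠ 2) :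
    let α₂ := 1 / (1 - ν / 2)
    let α₀ := (ν / 2) / (1 - ν / 2)
    let β₂ := 1 / (1 - ν / 2)
    let β₀ := (ν / 2) / (1 - ν / 2)
    ((1 / 2) * α₂ + (1 / 2) * α₀ - β₂ + β₀ = 0) ↔ ν = 2 / 3 := by
  intro α₂ α₀ β₂ β₀
  have hden : 1 - ν / 2 ≠ 0 := fun h => hν (by linarith)
  rw [secondOrderDefect_eq, div_eq_zero_iff, or_iff_left hden]
  constructor <;> intro h <;> linarith
end

section
/- For -2 ≤ ν < 2, the three A-stability conditions -α₁ ≥ 0, 1 - 2β₁ ≥ 0, and 2(β₂ - β₀) + α₁ ≥ 0 for the method induced by backward Euler plus the filter with parameter ν all hold if and only if -2/3 ≤ ν ≤ 2/3. -/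
/-- For `-2 ≤ ν < 2`, the three A-stability conditions hold iff
`-2/3 ≤ ν ≤ 2/3`. -/
theorem stmt_5 (ν : ℝ) (h1 : -2 ≤ ν) (h2 : ν < 2) :
    let α₁ := -(1 + ν / 2) / (1 - ν / 2)
    let β₂ := 1 / (1 - ν / 2)
    let β₁ := -ν / (1 - ν / 2)
    let β₀ := (ν / 2) / (1 - ν / 2)
    (-α₁ ≥ 0 ∧ 1 - 2 * β₁ ≥ 0 ∧ 2 * (β₂ - β₀) + α₁ ≥ 0) ↔
      (-2 / 3 ≤ ν ∧ ν ≤ 2 / 3) := by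
  dsimp only
  have hd : 0 < 1 - ν / 2 := by linarith
  have hd' : (1 - ν / 2) ≠ 0 := ne_of_gt hd
  have h2' : (2:ℝ) - ν ≠ 0 := ne_of_gt (by linarith)
  have e1 : -(-(1 + ν / 2) / (1 - ν / 2)) = (1 + ν / 2) / (1 - ν / 2) := by ring
  have e2 : 1 - 2 * (-ν / (1 - ν / 2)) = (1 + 3 * ν / 2) / (1 - ν / 2) := by
    rw [eq_div_iff hd']; field_simp [h2']; ring
  have e3 : 2 * (1 / (1 - ν / 2) - ν / 2 / (1 - ν / 2)) + -(1 + ν / 2) / (1 - ν / 2)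
      = (1 - 3 * ν / 2) / (1 - ν / 2) := by
    rw [eq_div_iff hd']; field_simp [h2']; ring
  rw [ge_iff_le, ge_iff_le, ge_iff_le, e1, e2, e3, le_div_iff₀ hd, le_div_iff₀ hd,
    le_div_iff₀ hd]
  constructor
  · rintro ⟨ha, hb, hc⟩
    constructor <;> linarith
  · rintro ⟨ha, hb⟩
    refine ⟨by nlinarith, by nlinarith, by nlinarith⟩
end

section
/- Let τ > 0 and assume 1+τ-ν > 0. Then the three conditions -α₁ ≥ 0, 1-2β₁ ≥ 0, and 2(β₂-β₀)+α₁ ≥ 0 for the variable-step method hold if and only if -(1+τ)/(1+2τ) ≤ ν ≤ min{(1+τ)/(3τ), 1+τ}. -/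
/-- Dahlquist's three A-stability conditions for the variable-step method
hold iff `-(1+τ)/(1+2τ) ≤ ν ≤ min{(1+τ)/(3τ), 1+τ}`. -/
theorem stmt_12 (τ ν : ℝ) (hτ : 0 < τ) (hν : ν ≤ 1 + τ) (h : 0 < 1 + τ - ν) :
    let α₁ := -(1 + τ + ν * τ) / (1 + τ - ν)
    let β₁ := -ν * (1 + τ) / (1 + τ - ν)
    let β₂ := (1 + τ) / (1 + τ - ν)
    let β₀ := τ * ν / (1 + τ - ν)
    (-α₁ ≥ 0 ∧ 1 - 2 * β₁ ≥ 0 ∧ 2 * (β₂ - β₀) + α₁ ≥ 0) ↔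
      (-(1 + τ) / (1 + 2 * τ) ≤ ν ∧ ν ≤ min ((1 + τ) / (3 * τ)) (1 + τ)) := by
  intro α₁ β₁ β₂ β₀
  have h2 : (0:ℝ) < 1 + 2 * τ := by linarith
  have h3 : (0:ℝ) < 3 * τ := by linarith
  have div_nn : ∀ x : ℝ, (0 ≤ x / (1 + τ - ν)) ↔ 0 ≤ x := by
    intro x
    rw [le_div_iff₀ h, zero_mul]
  have r1 : -α₁ = (1 + τ + ν * τ) / (1 + τ - ν) := by
    show -(-(1 + τ + ν * τ) / (1 + τ - ν)) = _
    ring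
  have r2 : 1 - 2 * β₁ = (1 + τ + ν * (1 + 2 * τ)) / (1 + τ - ν) := by
    show 1 - 2 * (-ν * (1 + τ) / (1 + τ - ν)) = _
    rw [eq_div_iff h.ne']
    field_simp
    ring
  have r3 : 2 * (β₂ - β₀) + α₁ = (1 + τ - ν * (3 * τ)) / (1 + τ - ν) := by
    show 2 * ((1 + τ) / (1 + τ - ν) - τ * ν / (1 + τ - ν)) +
        -(1 + τ + ν * τ) / (1 + τ - ν) = _
    rw [eq_div_iff h.ne']
    field_simp
    ring
  simp only [ge_iff_le, r1, r2, r3, div_nn, le_min_iff, div_le_iff₀ h2, le_div_iff₀ h3]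
  constructor
  · rintro ⟨c1, c2, c3⟩
    refine ⟨by linarith, by linarith, hν⟩
  · rintro ⟨c1, c2, c3⟩
    refine ⟨?_, by linarith, by linarith⟩
    nlinarith [mul_pos hτ h2]
end

section
/- For τ > 0 and ν = τ(1+τ)/(1+2τ), the phase-error coefficient C₂ = (2τ⁴ + τ³(4-5ν) + ν(1+2ν) + τν(1+6ν) + τ²(2-5ν+6ν²))/(6τ²(1+τ-ν)²) is strictly positive, so the leading phase error R - 1 = -C₂(ωk_n)² is negative, i.e. the scheme decelerates oscillations at leading order. -/
/-- For the second-order choice `ν = τ(1+τ)/(1+2τ)`, the phase-error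
coefficient `C₂` is strictly positive, so the leading phase error
`-C₂(ωkₙ)²` is negative. -/
theorem stmt_19 (τ : ℝ) (hτ : 0 < τ) :
    let ν := τ * (1 + τ) / (1 + 2 * τ)
    let C₂ := (2 * τ ^ 4 + τ ^ 3 * (4 - 5 * ν) + ν * (1 + 2 * ν) + τ * ν * (1 + 6 * ν)
        + τ ^ 2 * (2 - 5 * ν + 6 * ν ^ 2)) / (6 * τ ^ 2 * (1 + τ - ν) ^ 2)
    0 < C₂ ∧ ∀ x : ℝ, x ≠ 0 → -C₂ * x ^ 2 < 0 := by
  intro ν C₂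
  have hd : (0:ℝ) < 1 + 2 * τ := by linarith
  have hν : ν = τ * (1 + τ) / (1 + 2 * τ) := rfl
  have hC : 0 < C₂ := by
    have hnum : 0 < 2 * τ ^ 4 + τ ^ 3 * (4 - 5 * ν) + ν * (1 + 2 * ν) + τ * ν * (1 + 6 * ν)
        + τ ^ 2 * (2 - 5 * ν + 6 * ν ^ 2) := by
      rw [hν]
      have h2 : (0:ℝ) < (1 + 2*τ)^2 := by positivity
      have heq : 2 * τ ^ 4 + τ ^ 3 * (4 - 5 * (τ * (1 + τ) / (1 + 2 * τ))) +
          τ * (1 + τ) / (1 + 2 * τ) * (1 + 2 * (τ * (1 + τ) / (1 + 2 * τ))) +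
          τ * (τ * (1 + τ) / (1 + 2 * τ)) * (1 + 6 * (τ * (1 + τ) / (1 + 2 * τ))) +
          τ ^ 2 * (2 - 5 * (τ * (1 + τ) / (1 + 2 * τ)) + 6 * (τ * (1 + τ) / (1 + 2 * τ)) ^ 2) =
          ((2 * τ ^ 4 + τ ^ 3 * 4 + τ ^ 2 * 2) * (1 + 2*τ)^2
            - 5 * τ^4 * (1+τ) * (1+2*τ) + τ * (1 + τ) * (1+2*τ)
            + 2 * τ^2 * (1+τ)^2 + τ^2 * (1 + τ) * (1+2*τ) + 6 * τ^3 * (1+τ)^2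
            - 5 * τ^3 * (1+τ) * (1+2*τ) + 6 * τ^4 * (1+τ)^2) / (1+2*τ)^2 := by
        field_simp; ring
      rw [heq]
      apply div_pos _ h2
      nlinarith [sq_nonneg τ, sq_nonneg (1+τ), pow_pos hτ 3, pow_pos hτ 4, pow_pos hτ 2, mul_pos hτ hτ]
    have hden : 0 < 6 * τ ^ 2 * (1 + τ - ν) ^ 2 := by
      have : 1 + τ - ν = (1 + τ)^2 / (1 + 2*τ) := by rw [hν]; field_simp; ring
      rw [this]; positivity
    exact div_pos hnum hden
  refine ⟨hC, fun x hx => ?_⟩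
  have : 0 < x ^ 2 := by positivity
  nlinarith
end
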